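/- arXiv:2605.27611 — 2 statements merged into one kernel-verified Lean document; each statement's English description precedes it below -/
import Mathlib

section
/- Let $k$ be a natural number, and for a rational number $a$ and natural number $m$ define the two-step falling factorial $g(a,m) = \prod_{j=0}^{m-1} (a - 2j)$ (with $g(a,0)=1$). Then for all rational numbers $x, y$ one has the two-step Vandermonde convolution identity $\sum_{r=0}^{k} (-1)^r \binom{k}{r}\, g(x, k-r)\, g(y+2r, r) = g(x - y - 2, k)$. -/
/-- The two-step falling factorial `g(a,m) = ∏_{j=0}^{m-1} (a - 2j)`. -/
def twoStepFall (a : ℚ) (m : ℕ) : ℚ := ∏ j ∈ Finset.range m, (a - 2 * j)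

lemma twoStepFall_succ (a : ℚ) (m : ℕ) :
    twoStepFall a (m + 1) = twoStepFall a m * (a - 2 * m) :=
  Finset.prod_range_succ _ _

lemma twoStepFall_succ' (a : ℚ) (m : ℕ) :
    twoStepFall a (m + 1) = twoStepFall (a - 2) m * a := by
  rw [twoStepFall, Finset.prod_range_succ', twoStepFall]
  congr 1
  · apply Finset.prod_congr rfl
    intro j _
    push_cast
    ring
  · simp

lemma twoStepFall_reflect (y : ℚ) (r : ℕ) :
    twoStepFall (y + 2 * r) r = (-1 : ℚ) ^ r * twoStepFall (-y - 2) r := by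
  induction r with
  | zero => simp [twoStepFall]
  | succ n ih =>
      have h1 : twoStepFall (y + 2 * (n + 1 : ℕ)) (n + 1)
          = twoStepFall (y + 2 * n) n * (y + 2 * (n + 1 : ℕ)) := by
        rw [twoStepFall_succ']
        congr 2
        push_cast
        ring
      rw [h1, twoStepFall_succ, ih]
      push_cast
      ring

lemma twoStep_vand_aux (k : ℕ) (x z : ℚ) :
    ∑ r ∈ Finset.range (k + 1),
        (k.choose r : ℚ) * twoStepFall x (k - r) * twoStepFall z r
      = twoStepFall (x + z) k := by
  induction k with
  | zero => simp [twoStepFall]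
  | succ k ih =>
      rw [Finset.sum_range_succ']
      have hterm : ∀ r ∈ Finset.range (k + 1),
          ((k + 1).choose (r + 1) : ℚ) * twoStepFall x (k + 1 - (r + 1)) *
              twoStepFall z (r + 1)
          = (k.choose r : ℚ) * twoStepFall x (k - r) * twoStepFall z (r + 1)
            + (k.choose (r + 1) : ℚ) * twoStepFall x (k - r) * twoStepFall z (r + 1) := by
        intro r hr
        have hs : k + 1 - (r + 1) = k - r := by omega
        rw [hs, Nat.choose_succ_succ]
        push_cast
        ring
      rw [Finset.sum_congr rfl hterm, Finset.sum_add_distrib, add_assoc]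
      have hT1 : (∑ r ∈ Finset.range (k + 1),
            (k.choose (r + 1) : ℚ) * twoStepFall x (k - r) * twoStepFall z (r + 1))
          + ((k + 1).choose 0 : ℚ) * twoStepFall x (k + 1 - 0) * twoStepFall z 0
          = ∑ r ∈ Finset.range (k + 1),
              (k.choose r : ℚ) * twoStepFall x (k - r) * twoStepFall z r
              * (x - 2 * ((k : ℚ) - r)) := by
        have h2 : ∑ r ∈ Finset.range (k + 1),
              (k.choose r : ℚ) * twoStepFall x (k - r) * twoStepFall z r
              * (x - 2 * ((k : ℚ) - r))
            = ∑ r ∈ Finset.range (k + 1),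
              (k.choose r : ℚ) * twoStepFall x (k + 1 - r) * twoStepFall z r := by
          apply Finset.sum_congr rfl
          intro r hr
          rw [Finset.mem_range] at hr
          have hs : k + 1 - r = (k - r) + 1 := by omega
          rw [hs, twoStepFall_succ]
          have hc : ((k - r : ℚ)) = ((k - r : ℕ) : ℚ) := by
            have : r ≤ k := by omega
            push_cast [this]; ring
          rw [← hc]; ring
        rw [h2, Finset.sum_range_succ' (fun r =>
              (k.choose r : ℚ) * twoStepFall x (k + 1 - r) * twoStepFall z r) k,
            Finset.sum_range_succ]
        have hz : ((k.choose (k + 1) : ℚ)) * twoStepFall x (k - k) * twoStepFall z (k + 1)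
            = 0 := by
          simp [Nat.choose_succ_self]
        rw [hz, add_zero]
        congr 1
        · apply Finset.sum_congr rfl
          intro r hr
          rw [Finset.mem_range] at hr
          have : k + 1 - (r + 1) = k - r := by omega
          rw [this]
        · simp
      rw [hT1]
      have hT2 : ∀ r ∈ Finset.range (k + 1),
          (k.choose r : ℚ) * twoStepFall x (k - r) * twoStepFall z (r + 1)
          = (k.choose r : ℚ) * twoStepFall x (k - r) * twoStepFall z r * (z - 2 * r) := by
        intro r _
        rw [twoStepFall_succ]; ring
      rw [Finset.sum_congr rfl hT2, ← Finset.sum_add_distrib]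
      have hfin : ∀ r ∈ Finset.range (k + 1),
          (k.choose r : ℚ) * twoStepFall x (k - r) * twoStepFall z r * (z - 2 * r)
            + (k.choose r : ℚ) * twoStepFall x (k - r) * twoStepFall z r
              * (x - 2 * ((k : ℚ) - r))
          = ((k.choose r : ℚ) * twoStepFall x (k - r) * twoStepFall z r)
              * (x + z - 2 * k) := by
        intro r _; ring
      rw [Finset.sum_congr rfl hfin, ← Finset.sum_mul, ih, twoStepFall_succ]

theorem twoStep_vandermonde (k : ℕ) (x y : ℚ) :
    ∑ r ∈ Finset.range (k + 1),
        (-1 : ℚ) ^ r * (k.choose r : ℚ) * twoStepFall x (k - r) * twoStepFall (y + 2 * r) r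
      = twoStepFall (x - y - 2) k := by
  have h : ∀ r ∈ Finset.range (k + 1),
      (-1 : ℚ) ^ r * (k.choose r : ℚ) * twoStepFall x (k - r) * twoStepFall (y + 2 * r) r
      = (k.choose r : ℚ) * twoStepFall x (k - r) * twoStepFall (-y - 2) r := by
    intro r _
    rw [twoStepFall_reflect]
    have : ((-1 : ℚ) ^ r) * ((-1 : ℚ) ^ r) = 1 := by
      rw [← pow_add]; exact (neg_one_pow_eq_one_iff_even (by norm_num)).mpr (Even.add_self r)
    calc (-1 : ℚ) ^ r * (k.choose r : ℚ) * twoStepFall x (k - r) *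
          ((-1 : ℚ) ^ r * twoStepFall (-y - 2) r)
        = ((-1 : ℚ) ^ r * (-1 : ℚ) ^ r) * ((k.choose r : ℚ) * twoStepFall x (k - r)
            * twoStepFall (-y - 2) r) := by ring
      _ = _ := by rw [this]; ring
  rw [Finset.sum_congr rfl h, twoStep_vand_aux]
  congr 1
  ring
end

section
/- Let $G$ be a simple graph and let $e_1 \neq e_2$ be two edges of $G$. Suppose the graphs $G - e_1$ and $G - e_2$ obtained by deleting the respective edge are each bipartite (i.e. 2-colorable), and suppose the graph $G - e_1 - e_2$ obtained by deleting both edges is connected. Then $G$ itself is bipartite. -/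
private lemma fin2_helper : ∀ a b d : Fin 2, a ≠ b → (a = d ↔ ¬ b = d) := by decide

private lemma walk_parity {V : Type*} {H : SimpleGraph V} {c : V → Fin 2}
    (hc : ∀ ⦃a b : V⦄, H.Adj a b → c a ≠ c b) {u v : V} (p : H.Walk u v) :
    c u = c v ↔ Even p.length := by
  induction p with
  | nil => simp
  | cons h p ih =>
    rw [SimpleGraph.Walk.length_cons, Nat.even_add_one, ← ih]
    exact fin2_helper _ _ _ (hc h)

theorem bipartite_of_two_static_edges_connected
    {V : Type*} (G : SimpleGraph V) (e₁ e₂ : Sym2 V)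
    (he₁ : e₁ ∈ G.edgeSet) (he₂ : e₂ ∈ G.edgeSet) (hne : e₁ ≠ e₂)
    (hb₁ : (G.deleteEdges {e₁}).Colorable 2)
    (hb₂ : (G.deleteEdges {e₂}).Colorable 2)
    (hconn : (G.deleteEdges {e₁, e₂}).Connected) :
    G.Colorable 2 := by
  obtain ⟨C₁⟩ := hb₁
  obtain ⟨C₂⟩ := hb₂
  -- how to finish given a coloring proper off one edge and proper on that edge
  have done : ∀ (c : V → Fin 2) (u v : V),
      (∀ ⦃a b : V⦄, (G.deleteEdges {s(u, v)}).Adj a b → c a ≠ c b) →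
      c u ≠ c v → G.Colorable 2 := by
    intro c u v hvalid huv
    refine ⟨SimpleGraph.Coloring.mk c ?_⟩
    intro a b hab
    by_cases h : s(a, b) = s(u, v)
    · rw [Sym2.eq_iff] at h
      rcases h with ⟨rfl, rfl⟩ | ⟨rfl, rfl⟩
      · exact huv
      · exact huv.symm
    · exact hvalid (by simp [SimpleGraph.deleteEdges_adj, hab, h])
  induction e₁ using Sym2.ind with | _ u₁ v₁ =>
  induction e₂ using Sym2.ind with | _ u₂ v₂ =>
  set c₁ : V → Fin 2 := fun x => C₁ x
  set c₂ : V → Fin 2 := fun x => C₂ x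
  by_cases h1 : c₁ u₁ = c₁ v₁
  · by_cases h2 : c₂ u₂ = c₂ v₂
    · exfalso
      -- both colorings valid on H := G \ {e₁, e₂}
      have hv₁ : ∀ ⦃a b : V⦄, (G.deleteEdges {s(u₁, v₁), s(u₂, v₂)}).Adj a b → c₁ a ≠ c₁ b := by
        intro a b hab
        refine C₁.valid ?_
        rw [SimpleGraph.deleteEdges_adj] at hab ⊢
        simp only [Set.mem_insert_iff, Set.mem_singleton_iff] at hab
        exact ⟨hab.1, fun h => hab.2 (Or.inl h)⟩
      have hv₂ : ∀ ⦃a b : V⦄, (G.deleteEdges {s(u₁, v₁), s(u₂, v₂)}).Adj a b → c₂ a ≠ c₂ b := by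
        intro a b hab
        refine C₂.valid ?_
        rw [SimpleGraph.deleteEdges_adj] at hab ⊢
        simp only [Set.mem_insert_iff, Set.mem_singleton_iff] at hab
        exact ⟨hab.1, fun h => hab.2 (Or.inr h)⟩
      obtain ⟨p⟩ := hconn.preconnected u₂ v₂
      have hp₁ := walk_parity hv₁ p
      have hp₂ := walk_parity hv₂ p
      have : c₁ u₂ = c₁ v₂ := hp₁.mpr (hp₂.mp h2)
      -- but e₂ is an edge of G \ {e₁}
      have hadj : (G.deleteEdges {s(u₁, v₁)}).Adj u₂ v₂ := by
        rw [SimpleGraph.deleteEdges_adj]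
        exact ⟨(SimpleGraph.mem_edgeSet G).mp he₂, fun h => hne (Set.mem_singleton_iff.mp h).symm⟩
      exact C₁.valid hadj this
    · exact done c₂ u₂ v₂ (fun a b hab => C₂.valid hab) h2
  · exact done c₁ u₁ v₁ (fun a b hab => C₁.valid hab) h1
end
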